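/- Rounding lemma (deterministic form): Let A ∈ ℝ^{n×n} be symmetric with ∑_{i=1}^n |A_{ii}| ≤ 20√n and operator norm ‖A‖_op ≤ 3. Then for every ε₀ ∈ [0, 1] and every x ∈ ℝⁿ with d(x, [−1,1]ⁿ)² ≤ n·ε₀, there exists σ ∈ {−1, +1}ⁿ such that ⟨σ, Aσ⟩/(2n) ≥ ⟨x, Ax⟩/(2n) − 20·(√ε₀ + 1/√n). -/

import Mathlib

/-!
Clamping `x` coordinatewise gives the nearest point `y` of the cube, so `|x - y| ≤ √(n ε₀)`;
as `‖A‖ ≤ 3` and `|y| ≤ √n`, the quadratic form changes by at most `9 n √ε₀` from `x` to `y`.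
Then `y` is rounded to a vertex: with its diagonal removed, the form is affine in each
coordinate, so the coordinates can be pushed one at a time to `±1` without decreasing it, and
restoring the diagonal costs at most `∑ |Aᵢᵢ| ≤ 20 √n`.
-/

open Matrix

/-- The ℓ² operator norm of a real `n × n` matrix. -/
noncomputable def l2OpNorm {n : ℕ} (A : Matrix (Fin n) (Fin n) ℝ) : ℝ :=
  ‖(Matrix.toEuclideanCLM (𝕜 := ℝ) A : EuclideanSpace ℝ (Fin n) →L[ℝ] EuclideanSpace ℝ (Fin n))‖

/-- The squared Euclidean distance `d(x, [−1,1]ⁿ)²` from a point `x ∈ ℝⁿ` to the solid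
hypercube `[−1,1]ⁿ`. -/
noncomputable def distSqToCube {n : ℕ} (x : Fin n → ℝ) : ℝ :=
  sInf {d : ℝ | ∃ y : Fin n → ℝ, (∀ i, |y i| ≤ 1) ∧ d = ∑ i, (x i - y i) ^ 2}

noncomputable def cubeProj {ι : Type*} (x : ι → ℝ) : ι → ℝ := fun i => max (-1) (min 1 (x i))

lemma abs_cubeProj_le_one {ι : Type*} (x : ι → ℝ) (i : ι) : |cubeProj x i| ≤ 1 :=
  abs_le.mpr ⟨le_max_left _ _, max_le (by norm_num) (min_le_left _ _)⟩

lemma sq_sub_max_min_le {t z : ℝ} (hz : |z| ≤ 1) : (t - max (-1) (min 1 t)) ^ 2 ≤ (t - z) ^ 2 := by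
  obtain ⟨hz₁, hz₂⟩ := abs_le.mp hz
  rcases le_total t 1 with h₁ | h₁ <;> rcases le_total t (-1) with h₂ | h₂ <;>
    simp only [min_eq_left, min_eq_right, max_eq_left, max_eq_right, neg_le_self zero_le_one,
      *] <;> nlinarith

lemma sum_sq_sub_cubeProj_le_distSqToCube {n : ℕ} (x : Fin n → ℝ) :
    ∑ i, (x i - cubeProj x i) ^ 2 ≤ distSqToCube x := by
  refine le_csInf ⟨_, cubeProj x, abs_cubeProj_le_one x, rfl⟩ ?_
  rintro d ⟨z, hz, rfl⟩
  exact Finset.sum_le_sum fun i _ => sq_sub_max_min_le (hz i)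

lemma Function.update_eq_add_single {ι G : Type*} [DecidableEq ι] [AddCommGroup G] (y : ι → G)
    (i : ι) (t : G) : Function.update y i t = y + Pi.single i (t - y i) := by
  ext j
  rcases eq_or_ne j i with rfl | h <;> simp [*]

section Rounding

variable {ι : Type*} [Fintype ι] [DecidableEq ι]

lemma Matrix.add_single_dotProduct_mulVec_add_single {R : Type*} [CommRing R] (B : Matrix ι ι R)
    (y : ι → R) (i : ι) (s : R) :
    (y + Pi.single i s) ⬝ᵥ B *ᵥ (y + Pi.single i s) =
      y ⬝ᵥ B *ᵥ y + s * ((y ᵥ* B) i + (B *ᵥ y) i) + s ^ 2 * B i i := by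
  have h₁ : y ⬝ᵥ B *ᵥ Pi.single i s = (y ᵥ* B) i * s := by
    rw [dotProduct_mulVec, dotProduct_single]
  have h₂ : Pi.single i s ⬝ᵥ B *ᵥ (y + Pi.single i s) = s * ((B *ᵥ y) i + B i i * s) := by
    rw [single_dotProduct, mulVec_add, Pi.add_apply, mulVec_single]
    simp [mul_comm]
  rw [add_dotProduct, h₂, mulVec_add, dotProduct_add, h₁]
  ring

/-- On a coordinate where `B` has zero diagonal the quadratic form is affine, so moving that
coordinate to one of the endpoints `±1` does not decrease it. -/
lemma Matrix.exists_sign_le_dotProduct_mulVec_update {B : Matrix ι ι ℝ} {i : ι} (hB : B i i = 0)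
    {y : ι → ℝ} (hy : |y i| ≤ 1) :
    ∃ s : ℝ, (s = 1 ∨ s = -1) ∧
      y ⬝ᵥ B *ᵥ y ≤ Function.update y i s ⬝ᵥ B *ᵥ Function.update y i s := by
  have hq (s : ℝ) : Function.update y i s ⬝ᵥ B *ᵥ Function.update y i s =
      y ⬝ᵥ B *ᵥ y + (s - y i) * ((y ᵥ* B) i + (B *ᵥ y) i) := by
    rw [Function.update_eq_add_single, add_single_dotProduct_mulVec_add_single, hB]
    ring
  obtain ⟨hy₁, hy₂⟩ := abs_le.mp hy
  rcases le_total 0 ((y ᵥ* B) i + (B *ᵥ y) i) with hc | hc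
  · exact ⟨1, .inl rfl, by rw [hq]; nlinarith⟩
  · exact ⟨-1, .inr rfl, by rw [hq]; nlinarith⟩

lemma Matrix.exists_signs_le_dotProduct_mulVec {B : Matrix ι ι ℝ} (hB : ∀ i, B i i = 0)
    {y : ι → ℝ} (hy : ∀ i, |y i| ≤ 1) :
    ∃ σ : ι → ℝ, (∀ i, σ i = 1 ∨ σ i = -1) ∧ y ⬝ᵥ B *ᵥ y ≤ σ ⬝ᵥ B *ᵥ σ := by
  suffices ∀ s : Finset ι, ∃ z : ι → ℝ, (∀ i, |z i| ≤ 1) ∧ (∀ i ∈ s, z i = 1 ∨ z i = -1) ∧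
      y ⬝ᵥ B *ᵥ y ≤ z ⬝ᵥ B *ᵥ z by
    obtain ⟨σ, -, hσ, hle⟩ := this Finset.univ
    exact ⟨σ, fun i => hσ i (Finset.mem_univ i), hle⟩
  intro s
  induction s using Finset.induction_on with
  | empty => exact ⟨y, hy, by simp, le_rfl⟩
  | insert i s hi ih =>
    obtain ⟨z, hz, hzs, hle⟩ := ih
    obtain ⟨c, hc, hlec⟩ := exists_sign_le_dotProduct_mulVec_update (hB i) (hz i)
    refine ⟨Function.update z i c, fun j => ?_, fun j hj => ?_, hle.trans hlec⟩
    · rcases eq_or_ne j i with rfl | h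
      · rcases hc with rfl | rfl <;> simp
      · simpa [h] using hz j
    · rcases Finset.mem_insert.mp hj with rfl | hj
      · simpa using hc
      · simpa [ne_of_mem_of_not_mem hj hi] using hzs j hj

lemma Matrix.dotProduct_diagonal_mulVec (d y : ι → ℝ) :
    y ⬝ᵥ diagonal d *ᵥ y = ∑ i, d i * y i ^ 2 := by
  simp only [dotProduct, mulVec_diagonal]
  exact Finset.sum_congr rfl fun i _ => by ring

/-- The off-diagonal part of the form is maximised at a vertex of the cube, and the diagonal part
changes by at most `∑ |Aᵢᵢ|`. -/
lemma Matrix.exists_signs_dotProduct_mulVec_ge (A : Matrix ι ι ℝ) {y : ι → ℝ}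
    (hy : ∀ i, |y i| ≤ 1) :
    ∃ σ : ι → ℝ, (∀ i, σ i = 1 ∨ σ i = -1) ∧
      y ⬝ᵥ A *ᵥ y - ∑ i, |A i i| ≤ σ ⬝ᵥ A *ᵥ σ := by
  set B := A - diagonal A.diag
  have hA : ∀ v, v ⬝ᵥ A *ᵥ v = v ⬝ᵥ B *ᵥ v + ∑ i, A i i * v i ^ 2 := fun v => by
    simp [B, sub_mulVec, dotProduct_diagonal_mulVec]
  obtain ⟨σ, hσ, hle⟩ := exists_signs_le_dotProduct_mulVec (B := B) (by simp [B]) hy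
  refine ⟨σ, hσ, ?_⟩
  have hdiag : ∑ i, A i i * y i ^ 2 - ∑ i, |A i i| ≤ ∑ i, A i i * σ i ^ 2 := by
    rw [← Finset.sum_sub_distrib]
    refine Finset.sum_le_sum fun i _ => ?_
    have hσi : σ i ^ 2 = 1 := by rcases hσ i with h | h <;> simp [h]
    have hyi : y i ^ 2 ≤ 1 := by simpa using sq_le_sq' (abs_le.mp (hy i)).1 (abs_le.mp (hy i)).2
    rw [hσi]
    nlinarith [neg_abs_le (A i i), le_abs_self (A i i), sq_nonneg (y i)]
  rw [hA, hA σ]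
  linarith

end Rounding

section Euclidean

variable {ι : Type*} [Fintype ι]

lemma norm_toLp_two_eq_sqrt (u : ι → ℝ) : ‖WithLp.toLp 2 u‖ = √(∑ i, u i ^ 2) := by
  simp [EuclideanSpace.norm_eq]

lemma norm_toLp_two_le_sqrt_card {y : ι → ℝ} (hy : ∀ i, |y i| ≤ 1) :
    ‖WithLp.toLp 2 y‖ ≤ √(Fintype.card ι) := by
  rw [norm_toLp_two_eq_sqrt]
  gcongr
  calc ∑ i, y i ^ 2 ≤ ∑ _i : ι, (1 : ℝ) :=
        Finset.sum_le_sum fun i _ => by simpa using sq_le_one_iff_abs_le_one (y i) |>.mpr (hy i)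
    _ = Fintype.card ι := by simp

variable [DecidableEq ι]

lemma Matrix.abs_dotProduct_mulVec_le (A : Matrix ι ι ℝ) (u v : ι → ℝ) :
    |u ⬝ᵥ A *ᵥ v| ≤ ‖toEuclideanCLM (𝕜 := ℝ) A‖ * ‖WithLp.toLp 2 u‖ * ‖WithLp.toLp 2 v‖ := by
  have h : u ⬝ᵥ A *ᵥ v =
      inner ℝ (WithLp.toLp 2 u) (toEuclideanCLM (𝕜 := ℝ) A (WithLp.toLp 2 v)) := by
    rw [toEuclideanCLM_toLp, EuclideanSpace.inner_toLp_toLp, dotProduct_comm]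
    rfl
  calc |u ⬝ᵥ A *ᵥ v| ≤ ‖WithLp.toLp 2 u‖ * ‖toEuclideanCLM (𝕜 := ℝ) A (WithLp.toLp 2 v)‖ := by
        rw [h]; exact abs_real_inner_le_norm _ _
    _ ≤ ‖WithLp.toLp 2 u‖ * (‖toEuclideanCLM (𝕜 := ℝ) A‖ * ‖WithLp.toLp 2 v‖) := by
        gcongr; exact ContinuousLinearMap.le_opNorm _ _
    _ = _ := by ring

lemma Matrix.dotProduct_mulVec_sub_dotProduct_mulVec_le (A : Matrix ι ι ℝ) (u v : ι → ℝ) :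
    u ⬝ᵥ A *ᵥ u - v ⬝ᵥ A *ᵥ v ≤ ‖toEuclideanCLM (𝕜 := ℝ) A‖ * ‖WithLp.toLp 2 (u - v)‖ *
      (‖WithLp.toLp 2 (u - v)‖ + 2 * ‖WithLp.toLp 2 v‖) := by
  have hsplit : u ⬝ᵥ A *ᵥ u - v ⬝ᵥ A *ᵥ v =
      (u - v) ⬝ᵥ A *ᵥ (u - v) + (u - v) ⬝ᵥ A *ᵥ v + v ⬝ᵥ A *ᵥ (u - v) := by
    simp only [mulVec_sub, sub_dotProduct, dotProduct_sub]
    ring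
  have h₁ := (abs_le.mp (abs_dotProduct_mulVec_le A (u - v) (u - v))).2
  have h₂ := (abs_le.mp (abs_dotProduct_mulVec_le A (u - v) v)).2
  have h₃ := (abs_le.mp (abs_dotProduct_mulVec_le A v (u - v))).2
  linarith

end Euclidean

theorem rounding_lemma_deterministic_general (n : ℕ) (A : Matrix (Fin n) (Fin n) ℝ)
    (hdiag : ∑ i, |A i i| ≤ 20 * Real.sqrt n)
    (hop : l2OpNorm A ≤ 3)
    (ε₀ : ℝ) (hε₀' : ε₀ ≤ 1)
    (x : Fin n → ℝ) (hx : distSqToCube x ≤ n * ε₀) :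
    ∃ σ : Fin n → ℝ, (∀ i, σ i = 1 ∨ σ i = -1) ∧
      x ⬝ᵥ A.mulVec x / (2 * n) - 20 * (Real.sqrt ε₀ + 1 / Real.sqrt n)
        ≤ σ ⬝ᵥ A.mulVec σ / (2 * n) := by
  rcases n.eq_zero_or_pos with rfl | hn
  · exact ⟨fun _ => 1, by simp, by simp [Real.sqrt_nonneg]⟩
  set y := cubeProj x
  have hsqrt_n : √n * √n = n := Real.mul_self_sqrt n.cast_nonneg
  have hd : ‖WithLp.toLp 2 (x - y)‖ ≤ √n * √ε₀ := by
    rw [norm_toLp_two_eq_sqrt, ← Real.sqrt_mul n.cast_nonneg]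
    exact Real.sqrt_le_sqrt ((sum_sq_sub_cubeProj_le_distSqToCube x).trans hx)
  have hy : ‖WithLp.toLp 2 y‖ ≤ √n := by
    simpa using norm_toLp_two_le_sqrt_card (abs_cubeProj_le_one x)
  have hε : √ε₀ ≤ 1 := Real.sqrt_le_one.mpr hε₀'
  have hxy : x ⬝ᵥ A *ᵥ x - y ⬝ᵥ A *ᵥ y ≤ 9 * n * √ε₀ :=
    calc _ ≤ l2OpNorm A * ‖WithLp.toLp 2 (x - y)‖ *
          (‖WithLp.toLp 2 (x - y)‖ + 2 * ‖WithLp.toLp 2 y‖) :=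
          A.dotProduct_mulVec_sub_dotProduct_mulVec_le x y
      _ ≤ 3 * (√n * √ε₀) * (√n * 1 + 2 * √n) := by
          have : 0 ≤ l2OpNorm A := norm_nonneg _
          gcongr
          exact hd.trans (by gcongr)
      _ = 9 * n * √ε₀ := by linear_combination (9 * √ε₀) * hsqrt_n
  obtain ⟨σ, hσ, hyσ⟩ := A.exists_signs_dotProduct_mulVec_ge (y := y) (abs_cubeProj_le_one x)
  refine ⟨σ, hσ, ?_⟩
  have hn' : (0 : ℝ) < n := n.cast_pos.mpr hn
  have hbudget : 20 * (√ε₀ + 1 / √n) = (40 * n * √ε₀ + 40 * √n) / (2 * n) := by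
    have : 1 / √n * n = √n := by rw [one_div_mul_eq_div, div_eq_iff (by positivity), hsqrt_n]
    rw [eq_div_iff (by positivity)]
    linear_combination 40 * this
  rw [hbudget, ← sub_div, div_le_div_iff_of_pos_right (by positivity)]
  linarith [mul_nonneg hn'.le (Real.sqrt_nonneg ε₀), Real.sqrt_nonneg n]

/-- **Rounding lemma (deterministic form).** If `A` is symmetric with
`∑ᵢ |Aᵢᵢ| ≤ 20 √n` and `‖A‖_op ≤ 3`, then for every `ε₀ ∈ [0,1]` and every `x ∈ ℝⁿ` with
`d(x, [−1,1]ⁿ)² ≤ n ε₀` there exists `σ ∈ {−1,+1}ⁿ` with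
`⟨σ, Aσ⟩/(2n) ≥ ⟨x, Ax⟩/(2n) − 20 (√ε₀ + 1/√n)`. -/
theorem rounding_lemma_deterministic (n : ℕ) (A : Matrix (Fin n) (Fin n) ℝ)
    (hsymm : A.IsSymm)
    (hdiag : ∑ i, |A i i| ≤ 20 * Real.sqrt n)
    (hop : l2OpNorm A ≤ 3)
    (ε₀ : ℝ) (hε₀ : 0 ≤ ε₀) (hε₀' : ε₀ ≤ 1)
    (x : Fin n → ℝ) (hx : distSqToCube x ≤ n * ε₀) :
    ∃ σ : Fin n → ℝ, (∀ i, σ i = 1 ∨ σ i = -1) ∧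
      x ⬝ᵥ A.mulVec x / (2 * n) - 20 * (Real.sqrt ε₀ + 1 / Real.sqrt n)
        ≤ σ ⬝ᵥ A.mulVec σ / (2 * n) :=
  rounding_lemma_deterministic_general n A hdiag hop ε₀ hε₀' x hx
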